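/- Let L and F be finite-dimensional coalgebras over a field k, let x : L → End(F) be a linear map whose values are right invariant operators on F, and let π_x : T(L) → End(T(F)) be the associated algebra homomorphism. Then for every w ∈ T(L) one has π_x(w)(1) = ε_{T(L)}(w)·1 in T(F). Consequently ε_{T(L)} induces a counit on the realized algebra U_x = π_x(T(L)). -/

import Mathlib

open TensorProduct

/-- The unique algebra homomorphism `ε_{T(L)} : T(L) → k` with `ε_{T(L)}(ι l) = ε_L l`. -/
noncomputable def counitTensorAlgebra (k L : Type*) [Field k] [AddCommGroup L] [Module k L]
    [Coalgebra k L] : TensorAlgebra k L →ₐ[k] k :=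
  TensorAlgebra.lift k (Coalgebra.counit : L →ₗ[k] k)

theorem TensorAlgebra.apply_eq_lift_smul_of_forall_ι {R L M : Type*} [CommSemiring R]
    [AddCommMonoid L] [Module R L] [AddCommMonoid M] [Module R M]
    (π : TensorAlgebra R L →ₐ[R] Module.End R M) (ε : L →ₗ[R] R) (v : M)
    (h : ∀ l : L, π (TensorAlgebra.ι R l) v = ε l • v) (w : TensorAlgebra R L) :
    π w v = TensorAlgebra.lift R ε w • v := by
  induction w using TensorAlgebra.induction with
  | algebraMap r => simp [Module.algebraMap_end_apply]
  | ι l => rw [h, TensorAlgebra.lift_ι_apply]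
  | mul w₁ w₂ h₁ h₂ =>
    rw [map_mul, Module.End.mul_apply, h₂, map_smul, h₁, map_mul, smul_smul, mul_comm]
  | add w₁ w₂ h₁ h₂ => rw [map_add, LinearMap.add_apply, h₁, h₂, map_add, add_smul]

theorem realization_counit_general
    (k L F : Type*) [Field k]
    [AddCommGroup L] [Module k L] [Coalgebra k L]
    [AddCommGroup F] [Module k F]
    (X : L →ₗ[k] Module.End k (TensorAlgebra k F))
    (hX1 : ∀ l : L, X l 1 = Coalgebra.counit (R := k) l • (1 : TensorAlgebra k F))
    (πx : TensorAlgebra k L →ₐ[k] Module.End k (TensorAlgebra k F))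
    (hπx : ∀ l : L, πx (TensorAlgebra.ι k l) = X l) :
    ∀ w : TensorAlgebra k L,
      πx w (1 : TensorAlgebra k F) = counitTensorAlgebra k L w • (1 : TensorAlgebra k F) :=
  TensorAlgebra.apply_eq_lift_smul_of_forall_ι πx Coalgebra.counit 1 fun l => by
    rw [hπx, hX1]

/-- For the algebra homomorphism `π_x : T(L) → End(T(F))` associated to `x`,
one has `π_x(w)(1) = ε_{T(L)}(w)·1` for every `w ∈ T(L)`. -/
theorem realization_counit
    (k L F : Type*) [Field k]
    [AddCommGroup L] [Module k L] [Coalgebra k L] [FiniteDimensional k L]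
    [AddCommGroup F] [Module k F] [Coalgebra k F] [FiniteDimensional k F]
    (x : L →ₗ[k] Module.End k F)
    (hx : ∀ l : L, Coalgebra.comul ∘ₗ (x l : F →ₗ[k] F) =
      TensorProduct.map (x l) LinearMap.id ∘ₗ Coalgebra.comul)
    (X : L →ₗ[k] Module.End k (TensorAlgebra k F))
    (hX1 : ∀ l : L, X l 1 = Coalgebra.counit (R := k) l • (1 : TensorAlgebra k F))
    (hX2 : ∀ (l : L) (f : F), X l (TensorAlgebra.ι k f) = TensorAlgebra.ι k (x l f))
    (hX3 : ∀ (l : L) (w₁ w₂ : TensorAlgebra k F), X l (w₁ * w₂) =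
      LinearMap.mul' k (TensorAlgebra k F)
        (TensorProduct.map (LinearMap.applyₗ w₁ ∘ₗ X) (LinearMap.applyₗ w₂ ∘ₗ X)
          (Coalgebra.comul (R := k) l)))
    (πx : TensorAlgebra k L →ₐ[k] Module.End k (TensorAlgebra k F))
    (hπx : ∀ l : L, πx (TensorAlgebra.ι k l) = X l) :
    ∀ w : TensorAlgebra k L,
      πx w (1 : TensorAlgebra k F) = counitTensorAlgebra k L w • (1 : TensorAlgebra k F) :=
  realization_counit_general k L F X hX1 πx hπx
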